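/- arXiv:1608.04673 — 3 statements merged into one kernel-verified Lean document; each statement's English description precedes it below -/
import Mathlib

section
/- Let l be a prime, G a finite solvable group of order > 1, M a faithful simple F_l[G]-module, and N a minimal normal subgroup of G. Then l does not divide the order of N, and the submodule M^N of N-fixed vectors is zero, i.e. the only m ∈ M with n·m = m for all n ∈ N is m = 0. -/
/-!
The fixed space `M^N` is a `G`-submodule because `N` is normal, and it is not all of `M` because
`M` is faithful and `N ≠ 1`; by simplicity it is zero. A minimal normal subgroup of a solvable
group is abelian, so its Sylow `l`-subgroup is characteristic in `N`, hence normal in `G`; if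
`l ∣ |N|` minimality makes `N` an `l`-group. But an `l`-group acting on a nonzero `F_l`-space has
a nonzero fixed vector, since the number of fixed vectors is `≡ |M| ≡ 0 (mod l)`.
-/

open Representation

namespace Subgroup

variable {G : Type*} [Group G] {N : Subgroup G}

theorem isMulCommutative_of_minimal_normal [Group.IsSolvable G] [N.Normal] (hN : N ≠ ⊥)
    (hmin : ∀ N' : Subgroup G, N'.Normal → N' ≠ ⊥ → N' ≤ N → N' = N) : IsMulCommutative N := by
  rw [← commutator_self_eq_bot_iff]
  by_contra h
  exact (Group.IsSolvable.commutator_lt_of_ne_bot hN).ne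
    (hmin _ inferInstance h (commutator_le_left N N))

theorem isPGroup_of_minimal_normal [Finite G] {p : ℕ} [Fact p.Prime] [N.Normal]
    [IsMulCommutative N] (hmin : ∀ N' : Subgroup G, N'.Normal → N' ≠ ⊥ → N' ≤ N → N' = N)
    (hp : p ∣ Nat.card N) :
    IsPGroup p N := by
  let P : Sylow p N := default
  have : (P : Subgroup N).Characteristic :=
    P.characteristic_of_normal (normal_of_isMulCommutative _)
  have hPN : (P : Subgroup N).map N.subtype = N :=
    hmin _ inferInstance ((map_eq_bot_iff_of_injective _ N.subtype_injective).not.2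
      (P.ne_bot_of_dvd_card hp)) (map_subtype_le _)
  obtain ⟨n, hn⟩ := IsPGroup.iff_card.1 P.isPGroup'
  refine IsPGroup.of_card (n := n) ?_
  rw [← hPN, card_map_of_injective N.subtype_injective, hn]

end Subgroup

namespace Representation

variable {k G V : Type*} [CommRing k] [Group G] [AddCommGroup V] [Module k V]
  (ρ : Representation k G V) (N : Subgroup G)

theorem map_invariants_comp_subtype [N.Normal] (g : G) :
    (invariants (ρ.comp N.subtype)).map (ρ g) = invariants (ρ.comp N.subtype) := by
  refine le_antisymm (Submodule.map_le_iff_le_comap.2 (le_comap_invariants ρ N g)) fun v hv => ?_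
  refine ⟨ρ g⁻¹ v, le_comap_invariants ρ N g⁻¹ hv, ?_⟩
  simp [← Module.End.mul_apply, ← map_mul]

theorem invariants_comp_subtype_ne_top (hρ : Function.Injective ρ) (hN : N ≠ ⊥) :
    invariants (ρ.comp N.subtype) ≠ ⊤ := by
  contrapose! hN
  refine eq_bot_iff.2 fun n hn => Subgroup.mem_bot.2 (hρ ?_)
  ext v
  simpa using (hN ▸ Submodule.mem_top : v ∈ invariants (ρ.comp N.subtype)) ⟨n, hn⟩

theorem invariants_ne_bot_of_isPGroup {p : ℕ} [Fact p.Prime] {P W : Type*} [Group P]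
    [AddCommGroup W] [Module (ZMod p) W] [Module.Finite (ZMod p) W] [Nontrivial W]
    (hP : IsPGroup p P) (σ : Representation (ZMod p) P W) : invariants σ ≠ ⊥ := by
  let := MulAction.compHom W σ
  have : Finite W := Module.finite_of_finite (ZMod p)
  have hcard : p ∣ Nat.card W := by
    rw [Module.natCard_eq_pow_finrank (K := ZMod p), Nat.card_zmod]
    exact dvd_pow_self p Module.finrank_pos.ne'
  obtain ⟨w, hw, hw0⟩ := hP.exists_fixed_point_of_prime_dvd_card_of_fixed_point W hcard
    (a := 0) fun g => map_zero (σ g)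
  rw [Submodule.ne_bot_iff]
  exact ⟨w, hw, hw0.symm⟩

end Representation

theorem stmt6_general (l : ℕ) [Fact l.Prime] {G : Type*} [Group G] [Finite G] [Group.IsSolvable G]
    {M : Type*} [AddCommGroup M] [Module (ZMod l) M] [FiniteDimensional (ZMod l) M]
    (ρ : Representation (ZMod l) G M)
    (hfaith : Function.Injective ρ) (hM : Nontrivial M)
    (hsimple : ∀ W : Submodule (ZMod l) M, (∀ g : G, W.map (ρ g) = W) → W = ⊥ ∨ W = ⊤)
    (N : Subgroup G) [N.Normal] (hN : N ≠ ⊥)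
    (hmin : ∀ N' : Subgroup G, N'.Normal → N' ≠ ⊥ → N' ≤ N → N' = N) :
    ¬ (l ∣ Nat.card N) ∧ ∀ m : M, (∀ n ∈ N, ρ n m = m) → m = 0 := by
  have hfixed : invariants (ρ.comp N.subtype) = ⊥ :=
    (hsimple _ (ρ.map_invariants_comp_subtype N)).resolve_right
      (ρ.invariants_comp_subtype_ne_top N hfaith hN)
  refine ⟨fun hl => ?_, fun m hm => ?_⟩
  · have := Subgroup.isMulCommutative_of_minimal_normal hN hmin
    exact invariants_ne_bot_of_isPGroup (Subgroup.isPGroup_of_minimal_normal hmin hl) _ hfixed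
  · rw [← Submodule.mem_bot (ZMod l), ← hfixed]
    exact fun n => hm n n.2

theorem stmt6 (l : ℕ) [Fact l.Prime] {G : Type*} [Group G] [Finite G] [Group.IsSolvable G]
    (hG : 1 < Nat.card G)
    {M : Type*} [AddCommGroup M] [Module (ZMod l) M] [FiniteDimensional (ZMod l) M]
    (ρ : Representation (ZMod l) G M)
    (hfaith : Function.Injective ρ) (hM : Nontrivial M)
    (hsimple : ∀ W : Submodule (ZMod l) M, (∀ g : G, W.map (ρ g) = W) → W = ⊥ ∨ W = ⊤)
    (N : Subgroup G) [N.Normal] (hN : N ≠ ⊥)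
    (hmin : ∀ N' : Subgroup G, N'.Normal → N' ≠ ⊥ → N' ≤ N → N' = N) :
    ¬ (l ∣ Nat.card N) ∧ ∀ m : M, (∀ n ∈ N, ρ n m = m) → m = 0 :=
  stmt6_general l ρ hfaith hM hsimple N hN hmin
end

section
/- Let l be a prime, G a finite solvable group, and M a faithful simple F_l[G]-module. Let L be any group containing the additive group of M as a normal subgroup with L/M ≅ G, such that the conjugation action of L/M ≅ G on M coincides with the given module structure. Then the extension splits: there exists a subgroup H of L which is a complement to M, i.e. H ∩ M = {1} and H·M = L. -/
/-!
The last nontrivial term `A` of the derived series of `G` is an abelian normal subgroup. Its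
Sylow `l`-subgroup is normal in `G`, and a normal `l`-subgroup has a nonzero fixed vector in `M`;
since the fixed vectors of a normal subgroup form a submodule, simplicity and faithfulness force
it to be trivial, so `l ∤ |A|`, and likewise `A` fixes no nonzero vector. In `L`, the abelian
`l`-group `M` then has coprime index in the preimage `K` of `A`, so by Schur–Zassenhaus it has a
complement `B` in `K`, unique up to conjugation by `M`. By the Frattini argument `L = N_L(B) M`,
and `N_L(B) ∩ M` centralises `B M = K`, i.e. consists of `A`-fixed vectors, so it is trivial.
-/

open Subgroup MulAction Pointwise

theorem Group.IsSolvable.exists_normal_isMulCommutative_ne_bot (G : Type*) [Group G]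
    [Group.IsSolvable G] [Nontrivial G] :
    ∃ A : Subgroup G, A.Normal ∧ IsMulCommutative A ∧ A ≠ ⊥ := by
  classical
  have hsolv : ∃ n, derivedSeries G n = ⊥ := Group.IsSolvable.solvable
  obtain ⟨j, hj⟩ : ∃ j, Nat.find hsolv = j + 1 := Nat.exists_eq_succ_of_ne_zero fun h => by
    simpa [h] using Nat.find_spec hsolv
  refine ⟨derivedSeries G j, derivedSeries_normal G j, ?_, Nat.find_min hsolv (by omega)⟩
  rw [← commutator_self_eq_bot_iff, ← derivedSeries_succ, ← hj, Nat.find_spec hsolv]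

theorem Subgroup.exists_normal_isPGroup_ne_bot_of_dvd_natCard {G : Type*} [Group G] [Finite G]
    {p : ℕ} [Fact p.Prime] {A : Subgroup G} [A.Normal] [IsMulCommutative A]
    (hp : p ∣ Nat.card A) : ∃ P : Subgroup G, P.Normal ∧ IsPGroup p P ∧ P ≠ ⊥ := by
  let S : Sylow p A := default
  have : (S : Subgroup A).Characteristic := S.characteristic_of_normal inferInstance
  refine ⟨(S : Subgroup A).map A.subtype, inferInstance, S.isPGroup'.map A.subtype, ?_⟩
  rw [Ne, map_eq_bot_iff_of_injective _ A.subtype_injective]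
  exact S.ne_bot_of_dvd_card hp

theorem Subgroup.IsComplement'.stabilizer_quotientDiff_mk {K : Type*} [Group K] [Finite K]
    {N : Subgroup K} [N.Normal] [IsMulCommutative N] (hcop : (Nat.card N).Coprime N.index)
    {B : Subgroup K} (hB : IsComplement' N B) :
    stabilizer K (α := N.QuotientDiff) (Quotient.mk'' ⟨B, hB.symm⟩) = B := by
  have hle : B ≤ stabilizer K (α := N.QuotientDiff) (Quotient.mk'' ⟨B, hB.symm⟩) :=
    fun b hb => congrArg Quotient.mk'' (Subtype.ext (op_smul_coe_set (s := B) (inv_mem hb)))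
  refine (eq_of_le_of_card_ge hle (Nat.le_of_eq ?_)).symm
  exact Nat.eq_of_mul_eq_mul_left Nat.card_pos
    ((isComplement'_stabilizer_of_coprime hcop).card_mul_card.trans hB.card_mul_card.symm)

theorem Subgroup.IsComplement'.exists_conj_eq_of_coprime {K : Type*} [Group K] [Finite K]
    {N : Subgroup K} [N.Normal] [IsMulCommutative N] (hcop : (Nat.card N).Coprime N.index)
    {B₁ B₂ : Subgroup K} (h₁ : IsComplement' N B₁) (h₂ : IsComplement' N B₂) :
    ∃ n ∈ N, MulAut.conj n • B₁ = B₂ := by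
  obtain ⟨n, hn⟩ := exists_smul_eq (H := N) hcop (Quotient.mk'' ⟨B₁, h₁.symm⟩)
    (Quotient.mk'' ⟨B₂, h₂.symm⟩)
  refine ⟨n, n.2, ?_⟩
  rw [← h₁.stabilizer_quotientDiff_mk hcop, ← h₂.stabilizer_quotientDiff_mk hcop, ← hn]
  exact (stabilizer_smul_eq_stabilizer_map_conj (n : K) _).symm

theorem Subgroup.mem_normalizer_iff_conj_smul_eq {G : Type*} [Group G] {H : Subgroup G} {g : G} :
    g ∈ normalizer (H : Set G) ↔ MulAut.conj g • H = H :=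
  mem_normalizer_iff_map_conj_eq

/-- Frattini argument: all complements of `N` in `K` are `N`-conjugate, hence `L = N_L(B) N`. -/
theorem Subgroup.exists_disjoint_sup_eq_and_normalizer_sup_eq_top {L : Type*} [Group L] [Finite L]
    {N K : Subgroup L} [N.Normal] [K.Normal] [IsMulCommutative N] (hNK : N ≤ K)
    (hcop : (Nat.card N).Coprime (N.relIndex K)) :
    ∃ B : Subgroup L, Disjoint N B ∧ B ⊔ N = K ∧ normalizer (B : Set L) ⊔ N = ⊤ := by
  have hcop' : (Nat.card (N.subgroupOf K)).Coprime (N.subgroupOf K).index := by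
    rwa [Nat.card_congr (subgroupOfEquivOfLe hNK).toEquiv]
  obtain ⟨B', hB'⟩ := exists_right_complement'_of_coprime hcop'
  set B := B'.map K.subtype
  have hBK : B ≤ K := map_subtype_le B'
  have hB'eq : B.subgroupOf K = B' := comap_map_eq_self_of_injective K.subtype_injective B'
  have hNmap : (N.subgroupOf K).map K.subtype = N := by
    rw [subgroupOf_map_subtype, inf_of_le_left hNK]
  refine ⟨B, ?_, ?_, ?_⟩
  · rw [← hNmap]
    exact disjoint_map K.subtype_injective hB'.disjoint
  · rw [← hNmap, ← map_sup, sup_comm, hB'.sup_eq_top, ← MonoidHom.range_eq_map,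
      range_subtype]
  refine eq_top_iff.2 fun x _ => ?_
  have hconjBK : ∀ g : L, MulAut.conj g • B ≤ K := fun g =>
    Normal.conj_smul_eq_self g K ▸ pointwise_smul_le_pointwise_smul_iff.2 hBK
  have hcard : Nat.card ((MulAut.conj x • B).subgroupOf K) = Nat.card B' := by
    rw [Nat.card_congr (subgroupOfEquivOfLe (hconjBK x)).toEquiv,
      ← Nat.card_congr (equivSMul (MulAut.conj x) B).toEquiv,
      card_map_of_injective K.subtype_injective]
  have hcomp : IsComplement' (N.subgroupOf K) ((MulAut.conj x • B).subgroupOf K) := by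
    refine isComplement'_of_coprime ?_ ?_ <;> rw [hcard]
    · exact hB'.card_mul_card
    · exact (IsComplement.card_right hB' : Nat.card B' = _) ▸ hcop'
  obtain ⟨n, hnN, hn⟩ := hB'.exists_conj_eq_of_coprime hcop' hcomp
  rw [← hB'eq, conj_smul_subgroupOf hBK, subgroupOf_inj, inf_of_le_left (hconjBK x),
    inf_of_le_left (hconjBK n)] at hn
  have hnx : (n : L)⁻¹ * x ∈ normalizer (B : Set L) := by
    rw [mem_normalizer_iff_conj_smul_eq, map_mul, mul_smul, ← hn, map_inv, inv_smul_smul]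
  rw [sup_comm, ← mul_inv_cancel_left (n : L) x]
  exact mul_mem_sup (mem_subgroupOf.1 hnN) hnx

theorem Subgroup.commute_of_mem_normalizer_of_disjoint {G : Type*} [Group G] {N B : Subgroup G}
    [N.Normal] (hNB : Disjoint N B) {x b : G} (hxN : x ∈ N) (hxB : x ∈ normalizer (B : Set G))
    (hb : b ∈ B) : Commute x b := by
  have hN : x * b * x⁻¹ * b⁻¹ ∈ N := by
    simpa only [mul_assoc] using N.mul_mem hxN (Normal.conj_mem ‹_› _ (N.inv_mem hxN) b)
  have hB : x * b * x⁻¹ * b⁻¹ ∈ B :=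
    B.mul_mem ((mem_normalizer_iff.1 hxB b).1 hb) (B.inv_mem hb)
  have h1 := disjoint_def.1 hNB hN hB
  rwa [mul_inv_eq_one, mul_inv_eq_iff_eq_mul] at h1

/-- The complement is `N_L(B)` for a complement `B` of `N` in `K`: `N_L(B) ∩ N` centralises `B`
and the abelian `N`, hence `K = B N`. -/
theorem Subgroup.exists_isComplement'_of_coprime_of_inf_centralizer_eq_bot {L : Type*} [Group L]
    [Finite L] {N K : Subgroup L} [N.Normal] [K.Normal] [IsMulCommutative N] (hNK : N ≤ K)
    (hcop : (Nat.card N).Coprime (N.relIndex K)) (hcent : N ⊓ centralizer (K : Set L) = ⊥) :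
    ∃ H : Subgroup L, IsComplement' H N := by
  obtain ⟨B, hNB, hBN, hnorm⟩ := exists_disjoint_sup_eq_and_normalizer_sup_eq_top hNK hcop
  refine ⟨normalizer (B : Set L), isComplement'_of_disjoint_and_mul_eq_univ ?_ ?_⟩
  · rw [disjoint_iff, eq_bot_iff, ← hcent]
    rintro x ⟨hxB, hxN⟩
    have hK : K ≤ centralizer {x} := hBN ▸ sup_le
      (fun b hb => mem_centralizer_singleton_iff.2
        (commute_of_mem_normalizer_of_disjoint hNB hxN hxB hb).symm)
      (fun n hn => mem_centralizer_singleton_iff.2 (setLike_mul_comm hn hxN))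
    exact ⟨hxN, mem_centralizer_iff.2 fun k hk => mem_centralizer_singleton_iff.1 (hK hk)⟩
  · rw [← mul_normal, hnorm, coe_top]

namespace Representation

variable {k G V : Type*} [CommRing k] [Group G] [AddCommGroup V] [Module k V]
  {ρ : Representation k G V}

theorem invariants_comp_subtype_eq_bot (hfaith : Function.Injective ρ)
    (hsimple : ∀ W : Submodule k V, (∀ g : G, W.map (ρ g) = W) → W = ⊥ ∨ W = ⊤)
    {S : Subgroup G} [S.Normal] (hS : S ≠ ⊥) : invariants (ρ.comp S.subtype) = ⊥ := by
  refine (hsimple _ fun g => le_antisymm ?_ fun v hv => ?_).resolve_right fun htop => hS ?_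
  · exact Submodule.map_le_iff_le_comap.2 (le_comap_invariants ρ S g)
  · exact ⟨ρ g⁻¹ v, le_comap_invariants ρ S g⁻¹ hv, self_inv_apply ρ g v⟩
  · refine eq_bot_iff.2 fun s hs => Subgroup.mem_bot.2 (hfaith (LinearMap.ext fun v => ?_))
    have hv : v ∈ invariants (ρ.comp S.subtype) := htop ▸ Submodule.mem_top
    simpa using hv ⟨s, hs⟩

theorem eq_bot_of_isPGroup_of_normal {p : ℕ} [Fact p.Prime] [Module (ZMod p) V]
    [Module.Finite (ZMod p) V] [Nontrivial V] {ρ : Representation (ZMod p) G V}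
    (hfaith : Function.Injective ρ)
    (hsimple : ∀ W : Submodule (ZMod p) V, (∀ g : G, W.map (ρ g) = W) → W = ⊥ ∨ W = ⊤)
    {P : Subgroup G} [P.Normal] (hP : IsPGroup p P) : P = ⊥ := by
  by_contra hne
  let _ : MulAction P V := MulAction.compHom V (ρ.comp P.subtype)
  have : Finite V := Module.finite_of_finite (ZMod p)
  have hpV : p ∣ Nat.card V := by
    rw [Module.natCard_eq_pow_finrank (K := ZMod p), Nat.card_zmod]
    exact dvd_pow_self p Module.finrank_pos.ne'
  obtain ⟨v, hv, hv0⟩ := hP.exists_fixed_point_of_prime_dvd_card_of_fixed_point V hpV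
    (a := 0) fun g => map_zero (ρ g)
  have hvinv : v ∈ invariants (ρ.comp P.subtype) := hv
  rw [invariants_comp_subtype_eq_bot hfaith hsimple hne] at hvinv
  exact hv0 hvinv.symm

end Representation

theorem Subgroup.relIndex_ker_comap {G L : Type*} [Group G] [Group L] {π : L →* G}
    (hπ : Function.Surjective π) (A : Subgroup G) :
    π.ker.relIndex (A.comap π) = Nat.card A := by
  rw [← MonoidHom.comap_bot, relIndex_comap, map_comap_eq_self_of_surjective hπ,
    relIndex_bot_left]

section Extension

variable {M G L : Type*} [AddCommGroup M] [Group G] [Group L] {ι : M → L} {π : L →* G}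

noncomputable def kerEquivOfInjective (hι_inj : Function.Injective ι)
    (hker : ∀ x : L, x ∈ π.ker ↔ ∃ m : M, ι m = x) : M ≃ π.ker :=
  Equiv.ofBijective (fun m => ⟨ι m, (hker _).2 ⟨m, rfl⟩⟩)
    ⟨fun _ _ h => hι_inj (congrArg Subtype.val h), fun ⟨x, hx⟩ =>
      let ⟨m, hm⟩ := (hker x).1 hx
      ⟨m, Subtype.ext hm⟩⟩

theorem isMulCommutative_ker (hι_hom : ∀ m m' : M, ι (m + m') = ι m * ι m')
    (hker : ∀ x : L, x ∈ π.ker ↔ ∃ m : M, ι m = x) : IsMulCommutative π.ker :=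
  IsMulCommutative.of_setLike_mul_comm fun x hx y hy => by
    obtain ⟨m, rfl⟩ := (hker x).1 hx
    obtain ⟨m', rfl⟩ := (hker y).1 hy
    rw [← hι_hom, ← hι_hom, add_comm]

theorem ker_inf_centralizer_comap_eq_bot {k : Type*} [CommRing k] [Module k M]
    {ρ : Representation k G M} (hι_inj : Function.Injective ι) (hι_zero : ι 0 = 1)
    (hπ : Function.Surjective π) (hker : ∀ x : L, x ∈ π.ker ↔ ∃ m : M, ι m = x)
    (hconj : ∀ (x : L) (m : M), x * ι m * x⁻¹ = ι (ρ (π x) m))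
    {A : Subgroup G} (hA : Representation.invariants (ρ.comp A.subtype) = ⊥) :
    π.ker ⊓ Subgroup.centralizer (A.comap π : Set L) = ⊥ := by
  refine eq_bot_iff.2 fun x ⟨hxN, hxC⟩ => ?_
  obtain ⟨m, rfl⟩ := (hker x).1 hxN
  suffices hm : m ∈ Representation.invariants (ρ.comp A.subtype) by
    rw [hA] at hm
    rw [(Submodule.mem_bot k).1 hm, hι_zero]
    exact one_mem _
  rintro ⟨a, ha⟩
  obtain ⟨y, rfl⟩ := hπ a
  refine hι_inj ?_
  rw [MonoidHom.comp_apply, Subgroup.coe_subtype, ← hconj,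
    Subgroup.mem_centralizer_iff.1 hxC y ha, mul_inv_cancel_right]

end Extension

theorem stmt7 (l : ℕ) [Fact l.Prime] {G : Type*} [Group G] [Finite G] [Group.IsSolvable G]
    {M : Type*} [AddCommGroup M] [Module (ZMod l) M] [FiniteDimensional (ZMod l) M]
    (ρ : Representation (ZMod l) G M)
    (hfaith : Function.Injective ρ) (hM : Nontrivial M)
    (hsimple : ∀ W : Submodule (ZMod l) M, (∀ g : G, W.map (ρ g) = W) → W = ⊥ ∨ W = ⊤)
    {L : Type*} [Group L] (ι : M → L) (hι_inj : Function.Injective ι)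
    (hι_hom : ∀ m m' : M, ι (m + m') = ι m * ι m')
    (π : L →* G) (hπ : Function.Surjective π)
    (hker : ∀ x : L, x ∈ π.ker ↔ ∃ m : M, ι m = x)
    (hconj : ∀ (x : L) (m : M), x * ι m * x⁻¹ = ι (ρ (π x) m)) :
    ∃ H : Subgroup L, (∀ x ∈ H, (∃ m : M, ι m = x) → x = 1) ∧
      ∀ x : L, ∃ h ∈ H, ∃ m : M, x = h * ι m := by
  rcases subsingleton_or_nontrivial G with hG | hG
  · refine ⟨⊥, fun x hx _ => hx, fun x => ?_⟩
    obtain ⟨m, rfl⟩ := (hker x).1 (Subsingleton.elim _ _)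
    exact ⟨1, one_mem _, m, (one_mul _).symm⟩
  obtain ⟨A, hA, hAcomm, hA_ne⟩ := Group.IsSolvable.exists_normal_isMulCommutative_ne_bot G
  have hlA : ¬ l ∣ Nat.card A := fun hl =>
    let ⟨_, _, hP, hP_ne⟩ := Subgroup.exists_normal_isPGroup_ne_bot_of_dvd_natCard hl
    hP_ne (Representation.eq_bot_of_isPGroup_of_normal hfaith hsimple hP)
  have eM := kerEquivOfInjective hι_inj hker
  have : Finite M := Module.finite_of_finite (ZMod l)
  have : Finite L := π.finite_iff_finite_ker_range.2 ⟨.of_equiv M eM, inferInstance⟩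
  have := isMulCommutative_ker hι_hom hker
  have hcop : (Nat.card π.ker).Coprime (π.ker.relIndex (A.comap π)) := by
    rw [← Nat.card_congr eM, Module.natCard_eq_pow_finrank (K := ZMod l), Nat.card_zmod,
      Subgroup.relIndex_ker_comap hπ]
    exact ((Nat.Prime.coprime_iff_not_dvd Fact.out).2 hlA).pow_left _
  have hcent := ker_inf_centralizer_comap_eq_bot hι_inj (by simpa using hι_hom 0 0) hπ hker hconj
    (Representation.invariants_comp_subtype_eq_bot hfaith hsimple hA_ne)
  obtain ⟨H, hH⟩ := Subgroup.exists_isComplement'_of_coprime_of_inf_centralizer_eq_bot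
    (π.ker_le_comap A) hcop hcent
  refine ⟨H, fun x hxH hxN => Subgroup.disjoint_def.1 hH.disjoint hxH ((hker x).2 hxN),
    fun x => ?_⟩
  obtain ⟨⟨h, n⟩, rfl⟩ := hH.2 x
  obtain ⟨m, hm⟩ := (hker n).1 n.2
  exact ⟨h, h.2, m, by rw [hm]⟩
end

section
/- Let F be a field and E a primitive quartic extension of F, i.e. a separable extension with [E:F] = 4 having no intermediate fields other than F and E. Then the Galois group Gal(D|F) of the Galois closure D of E over F is isomorphic either to the alternating group A_4 or to the symmetric group S_4. -/
/-!
By the Galois correspondence, `H = Gal(D/E)` is a maximal subgroup of `G = Gal(D/F)` of index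
`[E:F] = 4`, and since `D` is the normal closure of `E`, `H` contains no nontrivial normal subgroup.
So `G` acts faithfully on the four cosets of `H`, embedding `G` into `S₄`. As `|G| = 4|H|` divides
`24`, either `|G| ∈ {4, 8}`, impossible because maximal subgroups of a `2`-group have index `2`,
or the image of `G` has index at most `2` in `S₄`, and is then `A₄` or `S₄`.
-/

open IntermediateField

theorem Equiv.Perm.eq_alternatingGroup_or_eq_top_of_index_le_two {α : Type*} [Fintype α]
    [DecidableEq α] {K : Subgroup (Equiv.Perm α)} (hK : K.index ≤ 2) :
    K = alternatingGroup α ∨ K = ⊤ := by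
  have := Nat.pos_of_ne_zero K.index_ne_zero_of_finite
  interval_cases h : K.index
  · exact Or.inr (Subgroup.index_eq_one.mp h)
  · exact Or.inl (Equiv.Perm.eq_alternatingGroup_of_index_eq_two h)

section GroupTheory

variable {G : Type*} [Group G]

theorem Subgroup.isSimpleOrder_quotient_of_isCoatom {H : Subgroup G} [H.Normal]
    (hH : IsCoatom H) : IsSimpleOrder (Subgroup (G ⧸ H)) :=
  (OrderIso.isSimpleOrder_iff (β := Set.Ici H) (QuotientGroup.comapMk'OrderIso H)).mpr
    (Set.isSimpleOrder_Ici_iff_isCoatom.mpr hH)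

theorem IsPGroup.index_eq_of_isCoatom {p : ℕ} [Fact p.Prime] [Finite G] (hG : IsPGroup p G)
    {H : Subgroup G} (hH : IsCoatom H) : H.index = p := by
  have : H.Normal := Subgroup.NormalizerCondition.normal_of_coatom H
    (Group.normalizerCondition_of_isNilpotent (h := hG.isNilpotent)) hH
  have := Subgroup.isSimpleOrder_quotient_of_isCoatom hH
  have : Nontrivial (G ⧸ H) := Subgroup.nontrivial_iff.mp inferInstance
  have hp : p ∣ Nat.card (G ⧸ H) :=
    (hG.to_quotient H).card_eq_or_dvd.resolve_left Finite.one_lt_card.ne'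
  obtain ⟨g, hg⟩ := exists_prime_orderOf_dvd_card' p hp
  have hgen : Subgroup.zpowers g = ⊤ :=
    (eq_bot_or_eq_top _).resolve_left fun h => by
      rw [Subgroup.zpowers_eq_bot.mp h, orderOf_one] at hg
      exact (Fact.out : p.Prime).one_lt.ne hg
  rw [Subgroup.index, ← Subgroup.card_top, ← hgen, Nat.card_zpowers, hg]

theorem Subgroup.exists_injective_perm_fin_of_normalCore_eq_bot {H : Subgroup G}
    [H.FiniteIndex] {n : ℕ} (hcore : H.normalCore = ⊥) (hidx : H.index = n) :
    ∃ φ : G →* Equiv.Perm (Fin n), Function.Injective φ := by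
  let e : G ⧸ H ≃ Fin n := Finite.equivFinOfCardEq hidx
  refine ⟨e.permCongrHom.toMonoidHom.comp (MulAction.toPermHom G (G ⧸ H)),
    e.permCongrHom.injective.comp ?_⟩
  rw [← MonoidHom.ker_eq_bot_iff, ← Subgroup.normalCore_eq_ker, hcore]

theorem Subgroup.nonempty_mulEquiv_alternatingGroup_or_perm_of_isCoatom [Finite G]
    {H : Subgroup G} (hmax : IsCoatom H) (hcore : H.normalCore = ⊥)
    (hidx : H.index = 4) :
    Nonempty (G ≃* alternatingGroup (Fin 4)) ∨ Nonempty (G ≃* Equiv.Perm (Fin 4)) := by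
  obtain ⟨φ, hφ⟩ := H.exists_injective_perm_fin_of_normalCore_eq_bot hcore hidx
  have hcardG : Nat.card G = 4 * Nat.card H := by rw [← hidx, H.index_mul_card]
  have hrange : φ.range.index * Nat.card G = 24 := by
    rw [Nat.card_congr (MonoidHom.ofInjective hφ).toEquiv, Subgroup.index_mul_card,
      Nat.card_perm, Nat.card_fin]
    rfl
  have hsmall : φ.range.index ≤ 2 := by
    by_contra! hbig
    have hH : Nat.card H ≤ 2 := by nlinarith
    have h2G : IsPGroup 2 G := IsPGroup.of_card_dvd_pow (n := 3) <| by
      have := Nat.card_pos (α := H)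
      interval_cases Nat.card H <;> simp [hcardG]
    have := h2G.index_eq_of_isCoatom hmax
    omega
  rcases Equiv.Perm.eq_alternatingGroup_or_eq_top_of_index_le_two hsmall with h | h
  · exact Or.inl ⟨(MonoidHom.ofInjective hφ).trans (MulEquiv.subgroupCongr h)⟩
  · exact Or.inr ⟨((MonoidHom.ofInjective hφ).trans (MulEquiv.subgroupCongr h)).trans
      Subgroup.topEquiv⟩

end GroupTheory

section Galois

variable {F D : Type*} [Field F] [Field D] [Algebra F D] [IsGalois F D]

theorem IntermediateField.isCoatom_fixingSubgroup [FiniteDimensional F D]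
    {E : IntermediateField F D} (hE : IsAtom E) : IsCoatom E.fixingSubgroup :=
  isAtom_dual_iff_isCoatom.mp ((IsGalois.intermediateFieldEquivSubgroup.isAtom_iff E).mpr hE)

theorem IntermediateField.fixingSubgroup_normalClosure (E : IntermediateField F D) :
    (normalClosure F E D).fixingSubgroup = E.fixingSubgroup.normalCore := by
  apply le_antisymm
  · exact Subgroup.normal_le_normalCore.mpr (fixingSubgroup_antitone E.le_normalClosure)
  · rw [← le_iff_le, normalClosure_le_iff_of_normal, le_iff_le]
    exact Subgroup.normalCore_le _

end Galois

theorem stmt12 {F D : Type*} [Field F] [Field D] [Algebra F D]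
    [FiniteDimensional F D] [IsGalois F D]
    (E : IntermediateField F D) (hdeg : Module.finrank F E = 4)
    (hprim : ∀ K : IntermediateField F D, K ≤ E → K = ⊥ ∨ K = E)
    (hclos : IntermediateField.normalClosure F E D = ⊤) :
    Nonempty ((D ≃ₐ[F] D) ≃* alternatingGroup (Fin 4)) ∨
      Nonempty ((D ≃ₐ[F] D) ≃* Equiv.Perm (Fin 4)) := by
  have hE : IsAtom E :=
    ⟨by rintro rfl; simp at hdeg, fun K hK => (hprim K hK.le).resolve_right hK.ne⟩
  refine Subgroup.nonempty_mulEquiv_alternatingGroup_or_perm_of_isCoatom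
    (isCoatom_fixingSubgroup hE) ?_ ?_
  · rw [← fixingSubgroup_normalClosure, hclos, fixingSubgroup_top]
  · rw [← finrank_eq_fixingSubgroup_index, hdeg]
end
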